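/- Let M(κ,τ) be a Riemannian Killing submersion with κ − 4τ² > 0 and let Σ be a strongly stable compact orientable surface of genus g and constant mean curvature H immersed in M(κ,τ). Then H² < 2π(1−g)/Area(Σ) + (1/(4 Area(Σ))) ∫_Σ (|∇τ| − κ), and this inequality is always strict. -/

import Mathlib

/-!
Adding the Gauss equation `|A|² = 4H² + 2K̄_Σ − 2K` to twice the identity
`K̄_Σ + Ric(N,N) = κ − τ²` gives, pointwise on `Σ`,
`|∇τ| − κ = (|A|² + κ − 2τ² + |∇τ|) − 2 (|A|² + Ric(N,N)) + 4H² − 2K`.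
After integration, Gauss–Bonnet turns `∫ K` into `4π(1 − g)`, stability (the constant test
function in the min-max characterization of `λ₁ ≥ 0`) makes `∫ (|A|² + Ric(N,N)) ≤ 0`, and the
first term is positive everywhere since `κ − 2τ² ≥ κ − 4τ² > 0`.  Hence
`4H² Area(Σ) < 8π(1 − g) + ∫ (|∇τ| − κ)`.
-/

open MeasureTheory

noncomputable section

/-- Abstract model of a compact orientable surface `Σ` of constant mean curvature
`H` immersed in a Riemannian Killing submersion `M(κ,τ)` (a Riemannian submersion
`π : M → B` of an oriented Riemannian 3-manifold over a surface `B`, whose vertical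
unit vector field `ξ` is a unit Killing field, with bundle curvature `τ : M → ℝ`
determined by `∇̄_E ξ = τ (E ∧ ξ)` and base Gaussian curvature `κ`).  Along `Σ`
(with its area measure `μ`) we record: the restrictions of `τ` and `κ`, the norm
`|∇τ|` of the ambient gradient of `τ`, the angle function `ν = ⟨N, ξ⟩` of the unit
normal `N`, the Gaussian curvature `K` of `Σ`, the ambient sectional curvature
`K̄_Σ` of the tangent plane, the squared norm `|A|²` of the shape operator, the
Ricci curvature `Ric(N,N)` of `M` in the normal direction, the Laplacian and the
intrinsic gradient of `Σ`, and the first eigenvalue `λ₁` of the Jacobi (stability)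
operator `J = Δ + |A|² + Ric(N,N)`; together with the structural relations between
them: the expressions of `Ric(N,N)` and of `K̄_Σ` in a Killing submersion (in terms
of a horizontal direction `X` of an adapted frame), the Gauss equation, the
Gauss–Bonnet theorem, the existence of a positive first eigenfunction and the
min-max characterization of `λ₁` evaluated on the constant test function. -/
structure CMCSurfaceInKillingSubmersion where
  /-- the points of the surface `Σ` -/
  carrier : Type
  /-- the Borel σ-algebra of `Σ` -/
  [mble : MeasurableSpace carrier]
  /-- the area measure of `Σ` -/
  μ : Measure carrier
  /-- `Σ` is compact, so it has finite area -/
  finite : IsFiniteMeasure μ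
  area_pos : 0 < (μ Set.univ).toReal
  /-- the genus of `Σ` -/
  genus : ℕ
  /-- the (constant) mean curvature of `Σ` -/
  H : ℝ
  /-- the bundle curvature `τ` of `M(κ,τ)`, restricted to `Σ` -/
  τ : carrier → ℝ
  /-- `|∇τ|`, the norm of the gradient of `τ`, restricted to `Σ` -/
  gradτNorm : carrier → ℝ
  gradτNorm_nonneg : ∀ x, 0 ≤ gradτNorm x
  /-- the Gaussian curvature `κ` of the base `B`, pulled back to `Σ` -/
  κ : carrier → ℝ
  /-- the angle function `ν = ⟨N, ξ⟩` -/
  ν : carrier → ℝ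
  ν_sq_le_one : ∀ x, ν x ^ 2 ≤ 1
  /-- the Gaussian curvature `K` of `Σ` -/
  K : carrier → ℝ
  /-- `K̄_Σ`, the ambient sectional curvature of the tangent plane of `Σ` -/
  KsecAmb : carrier → ℝ
  /-- `|A|²`, the squared norm of the shape operator `A` of `Σ` -/
  normAsq : carrier → ℝ
  /-- `Ric(N,N)`, the ambient Ricci curvature in the unit normal direction `N` -/
  Ric : carrier → ℝ
  /-- `X(τ)`, the derivative of `τ` along the horizontal direction `X` of an
  adapted frame along `Σ` -/
  Xτ : carrier → ℝ
  Xτ_le : ∀ x, |Xτ x| ≤ gradτNorm x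
  /-- the expression of `Ric(N,N)` in a Killing submersion -/
  ric_formula : ∀ x, Ric x =
    κ x - 2 * τ x ^ 2 - ν x ^ 2 * (κ x - 4 * τ x ^ 2)
      + 2 * ν x * Real.sqrt (1 - ν x ^ 2) * Xτ x
  /-- the expression of `K̄_Σ` in a Killing submersion -/
  sec_formula : ∀ x, KsecAmb x =
    τ x ^ 2 + ν x ^ 2 * (κ x - 4 * τ x ^ 2)
      - 2 * ν x * Real.sqrt (1 - ν x ^ 2) * Xτ x
  /-- the Gauss equation `|A|² = 2(2H² + K̄_Σ − K)` -/
  gauss_equation : ∀ x, normAsq x = 2 * (2 * H ^ 2 + KsecAmb x - K x)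
  /-- `|φ|² = |A|² − 2H² ≥ 0`, `φ` being the total umbilicity tensor -/
  normAsq_ge : ∀ x, 2 * H ^ 2 ≤ normAsq x
  /-- the Gauss–Bonnet theorem -/
  gauss_bonnet : ∫ x, K x ∂μ = 4 * Real.pi * (1 - (genus : ℝ))
  /-- the Laplacian `Δ` of `Σ` -/
  lap : (carrier → ℝ) → carrier → ℝ
  /-- the squared norm `|∇f|²` of the intrinsic gradient on `Σ` -/
  gradSq : (carrier → ℝ) → carrier → ℝ
  gradSq_nonneg : ∀ f x, 0 ≤ gradSq f x
  /-- the first eigenvalue of the Jacobi operator `J = Δ + |A|² + Ric(N,N)` -/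
  lambda₁ : ℝ
  /-- `λ₁` admits a positive eigenfunction `ρ`: `Δρ = −(λ₁ + |A|² + Ric(N,N))ρ` -/
  exists_eigenfun : ∃ ρ : carrier → ℝ, (∀ x, 0 < ρ x) ∧
    ∀ x, lap ρ x = -(lambda₁ + normAsq x + Ric x) * ρ x
  /-- the min-max characterization of `λ₁` applied to the test function `f = 1` -/
  lambda₁_le : lambda₁ * (μ Set.univ).toReal ≤ - ∫ x, (normAsq x + Ric x) ∂μ
  integr_normAsq : Integrable normAsq μ
  integr_Ric : Integrable Ric μ
  integr_K : Integrable K μ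
  integr_Ksec : Integrable KsecAmb μ
  integr_kappa : Integrable κ μ
  integr_tau_sq : Integrable (fun x => τ x ^ 2) μ
  integr_gradτ : Integrable gradτNorm μ

attribute [instance] CMCSurfaceInKillingSubmersion.mble
  CMCSurfaceInKillingSubmersion.finite

namespace CMCSurfaceInKillingSubmersion

variable (S : CMCSurfaceInKillingSubmersion)

/-- the area of `Σ` -/
def area : ℝ := (S.μ Set.univ).toReal

/-- `Σ` is a horizontal surface: its angle function satisfies `ν² ≡ 1`. -/
def IsHorizontal : Prop := ∀ x, S.ν x ^ 2 = 1

/-- `Σ` is a Hopf torus, i.e. the total lift `π⁻¹(γ)` of a closed curve `γ` in the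
base (of constant geodesic curvature, since `Σ` has constant mean curvature):
this is characterized by the vanishing of the angle function, `ν ≡ 0`, together
with `Σ` being a torus. -/
def IsHopfTorus : Prop := (∀ x, S.ν x = 0) ∧ S.genus = 1

/-- `Σ` is strongly stable: `λ₁ ≥ 0`. -/
def StronglyStable : Prop := 0 ≤ S.lambda₁

/-- the Jacobi (stability) operator `J = Δ + |A|² + Ric(N,N)` of `Σ` -/
def jacobi (f : S.carrier → ℝ) (x : S.carrier) : ℝ :=
  S.lap f x + (S.normAsq x + S.Ric x) * f x

/-- `ρ` is a (positive) first eigenfunction of the Jacobi operator: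
`Jρ = −λ₁ρ`, i.e. `Δρ = −(λ₁ + |A|² + Ric(N,N))ρ`, with `ρ > 0`. -/
def IsFirstEigenfunction (ρ : S.carrier → ℝ) : Prop :=
  (∀ x, 0 < ρ x) ∧ ∀ x, S.lap ρ x = -(S.lambda₁ + S.normAsq x + S.Ric x) * ρ x

end CMCSurfaceInKillingSubmersion

theorem MeasureTheory.integral_pos_of_forall_pos {α : Type*} [MeasurableSpace α]
    {μ : Measure α} {f : α → ℝ} (hμ : μ ≠ 0) (hf : ∀ x, 0 < f x) (hfi : Integrable f μ) :
    0 < ∫ x, f x ∂μ := by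
  rw [integral_pos_iff_support_of_nonneg (fun x => (hf x).le) hfi,
    Set.eq_univ_of_forall fun x => Function.mem_support.mpr (hf x).ne']
  exact Measure.measure_univ_pos.mpr hμ

namespace CMCSurfaceInKillingSubmersion

variable (S : CMCSurfaceInKillingSubmersion)

theorem measure_ne_zero : S.μ ≠ 0 := by
  intro h
  simpa [h] using S.area_pos

theorem integral_const_eq_area_mul (c : ℝ) : ∫ _ : S.carrier, c ∂S.μ = S.area * c := by
  rw [integral_const, smul_eq_mul, measureReal_def, area]

theorem integral_normAsq_add_Ric_nonpos (hstab : S.StronglyStable) :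
    ∫ x, (S.normAsq x + S.Ric x) ∂S.μ ≤ 0 := by
  nlinarith [mul_nonneg hstab S.area_pos.le, S.lambda₁_le]

/-- Both sides are half the scalar curvature of `M(κ,τ)`; the terms in `ν` cancel. -/
theorem KsecAmb_add_Ric (x : S.carrier) : S.KsecAmb x + S.Ric x = S.κ x - S.τ x ^ 2 := by
  rw [S.sec_formula, S.ric_formula]
  ring

theorem gradτNorm_sub_κ_eq (x : S.carrier) :
    S.gradτNorm x - S.κ x = (S.normAsq x + S.κ x - 2 * S.τ x ^ 2 + S.gradτNorm x)
      - 2 * (S.normAsq x + S.Ric x) + 4 * S.H ^ 2 - 2 * S.K x := by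
  linear_combination S.gauss_equation x + 2 * S.KsecAmb_add_Ric x

theorem integrable_normAsq_add_κ_sub_two_τ_sq_add_gradτNorm :
    Integrable (fun x => S.normAsq x + S.κ x - 2 * S.τ x ^ 2 + S.gradτNorm x) S.μ :=
  ((S.integr_normAsq.add S.integr_kappa).sub (S.integr_tau_sq.const_mul 2)).add S.integr_gradτ

theorem integral_normAsq_add_κ_sub_two_τ_sq_add_gradτNorm_pos
    (hpos : ∀ x, 0 < S.κ x - 4 * S.τ x ^ 2) :
    0 < ∫ x, (S.normAsq x + S.κ x - 2 * S.τ x ^ 2 + S.gradτNorm x) ∂S.μ := by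
  refine integral_pos_of_forall_pos S.measure_ne_zero (fun x => ?_)
    S.integrable_normAsq_add_κ_sub_two_τ_sq_add_gradτNorm
  nlinarith [hpos x, S.normAsq_ge x, sq_nonneg S.H, sq_nonneg (S.τ x), S.gradτNorm_nonneg x]

theorem integral_gradτNorm_sub_κ :
    ∫ x, (S.gradτNorm x - S.κ x) ∂S.μ
      = ∫ x, (S.normAsq x + S.κ x - 2 * S.τ x ^ 2 + S.gradτNorm x) ∂S.μ
        - 2 * ∫ x, (S.normAsq x + S.Ric x) ∂S.μ + 4 * S.H ^ 2 * S.area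
        - 8 * Real.pi * (1 - S.genus) := by
  have hP := S.integrable_normAsq_add_κ_sub_two_τ_sq_add_gradτNorm
  have hJ : Integrable (fun x => S.normAsq x + S.Ric x) S.μ :=
    S.integr_normAsq.add S.integr_Ric
  simp_rw [S.gradτNorm_sub_κ_eq]
  rw [integral_sub, integral_add, integral_sub hP (hJ.const_mul 2), integral_const_eq_area_mul,
    integral_const_mul, integral_const_mul, S.gauss_bonnet]
  · ring
  exacts [hP.sub (hJ.const_mul 2), integrable_const _,
    (hP.sub (hJ.const_mul 2)).add (integrable_const _), S.integr_K.const_mul 2]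

end CMCSurfaceInKillingSubmersion

/-- Corollary, case `κ − 4τ² > 0`, (ii).  Let `M(κ,τ)` be a
Riemannian Killing submersion with `κ − 4τ² > 0` and `Σ` a strongly stable
compact orientable surface of genus `g` and constant mean curvature `H` immersed
in `M(κ,τ)`.  Then `H² < 2π(1−g)/Area(Σ) + (1/(4 Area(Σ))) ∫_Σ (|∇τ| − κ)`,
and this inequality is always strict. -/
theorem stable_H_bound_pos_ii (S : CMCSurfaceInKillingSubmersion)
    (hpos : ∀ x, 0 < S.κ x - 4 * S.τ x ^ 2)
    (hstab : S.StronglyStable) :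
    S.H ^ 2 < 2 * Real.pi * (1 - (S.genus : ℝ)) / S.area
      + (1 / (4 * S.area)) * ∫ x, (S.gradτNorm x - S.κ x) ∂S.μ := by
  have hP := S.integral_normAsq_add_κ_sub_two_τ_sq_add_gradτNorm_pos hpos
  have hJ := S.integral_normAsq_add_Ric_nonpos hstab
  have hA : 0 < S.area := S.area_pos
  rw [S.integral_gradτNorm_sub_κ, ← sub_pos]
  field_simp
  linarith
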